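/- Every 2-groups partitionable discrete NEP with X nonempty and bounded has at least one Nash equilibrium. -/

import Mathlib

open Finset

variable {ι I : Type*}

/-- Objective of player `ν` in a 2-groups partitionable discrete NEP
(flattened variables): `θ_ν(x) = Σ_i ϑ_i(x_i) + (1/2)xᵛᵀQᵛxᵛ + Θ^O(x⁻ᵛ)ᵀxᵛ`. -/
noncomputable def tgObj [Fintype I] [DecidableEq ι]
    (player : I → ι) (ϑ : I → ℝ → ℝ) (Q : I → I → ℝ)
    (Θ : I → (I → ℝ) → ℝ) (ν : ι) (x : I → ℝ) : ℝ :=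
  (∑ i ∈ univ.filter (fun i => player i = ν), (ϑ i (x i) + Θ i x * x i))
  + (1 / 2) * ∑ i ∈ univ.filter (fun i => player i = ν),
      ∑ j ∈ univ.filter (fun j => player j = ν), Q i j * x i * x j

/-- Discrete Nash equilibrium of the 2-groups partitionable game. -/
def tgIsEq [Fintype I] [DecidableEq ι]
    (player : I → ι) (ϑ : I → ℝ → ℝ) (Q : I → I → ℝ)
    (Θ : I → (I → ℝ) → ℝ) (l u : I → ℤ) (x : I → ℤ) : Prop :=
  (∀ j, l j ≤ x j ∧ x j ≤ u j) ∧
  ∀ ν, ∀ y : I → ℤ, (∀ j, l j ≤ y j ∧ y j ≤ u j) →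
    (∀ j, player j ≠ ν → y j = x j) →
    tgObj player ϑ Q Θ ν (fun t => (x t : ℝ)) ≤ tgObj player ϑ Q Θ ν (fun t => (y t : ℝ))


section AuxTG

section Abstract
variable {ι I : Type*} [Fintype I] [DecidableEq I] [DecidableEq ι]

variable {player : I → ι} {L U : I → ℤ} {F : ι → (I → ℤ) → ℝ}

/-- feasible deviations of player ν from profile x -/
noncomputable def dev (player : I → ι) (L U : I → ℤ) (ν : ι) (x : I → ℤ) : Finset (I → ℤ) :=
  (Finset.Icc L U).filter (fun y => ∀ j, player j ≠ ν → y j = x j)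

lemma mem_dev {player : I → ι} {L U : I → ℤ} {ν : ι} {x y : I → ℤ} :
    y ∈ dev player L U ν x ↔ (y ∈ Finset.Icc L U ∧ ∀ j, player j ≠ ν → y j = x j) := by
  simp [dev]

open Classical in
noncomputable def mins (player : I → ι) (L U : I → ℤ) (F : ι → (I → ℤ) → ℝ) (ν : ι) (x : I → ℤ) : Finset (I → ℤ) :=
  (dev player L U ν x).filter (fun y => ∀ y' ∈ dev player L U ν x, F ν y ≤ F ν y')

lemma mem_mins {player : I → ι} {L U : I → ℤ} {F : ι → (I → ℤ) → ℝ} {ν : ι} {x y : I → ℤ} :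
    y ∈ mins player L U F ν x ↔
      (y ∈ dev player L U ν x ∧ ∀ y' ∈ dev player L U ν x, F ν y ≤ F ν y') := by
  classical
  rw [mins, Finset.mem_filter]

variable (hsub : ∀ ν, ∀ p ∈ Finset.Icc L U, ∀ q ∈ Finset.Icc L U,
    (∀ j, player j ≠ ν → p j ≤ q j) → F ν (p ⊔ q) + F ν (p ⊓ q) ≤ F ν p + F ν q)

include hsub

lemma sup_mem_mins {ν : ι} {x y z : I → ℤ}
    (hy : y ∈ mins player L U F ν x) (hz : z ∈ mins player L U F ν x) :
    y ⊔ z ∈ mins player L U F ν x := by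
  rw [mem_mins] at hy hz ⊢
  obtain ⟨hybox, hyag⟩ := mem_dev.1 hy.1
  obtain ⟨hzbox, hzag⟩ := mem_dev.1 hz.1
  have hymin := hy.2
  have hzmin := hz.2
  rw [Finset.mem_Icc] at hybox hzbox
  have hsupbox : y ⊔ z ∈ Finset.Icc L U := by
    rw [Finset.mem_Icc]
    exact ⟨le_trans hybox.1 le_sup_left, sup_le hybox.2 hzbox.2⟩
  have hinfbox : y ⊓ z ∈ Finset.Icc L U := by
    rw [Finset.mem_Icc]
    exact ⟨le_inf hybox.1 hzbox.1, le_trans inf_le_left hybox.2⟩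
  have hsupag : ∀ j, player j ≠ ν → (y ⊔ z) j = x j := fun j hj => by
    rw [Pi.sup_apply, hyag j hj, hzag j hj, sup_idem]
  have hinfag : ∀ j, player j ≠ ν → (y ⊓ z) j = x j := fun j hj => by
    rw [Pi.inf_apply, hyag j hj, hzag j hj, inf_idem]
  have hsupdev : y ⊔ z ∈ dev player L U ν x := mem_dev.2 ⟨hsupbox, hsupag⟩
  have hinfdev : y ⊓ z ∈ dev player L U ν x := mem_dev.2 ⟨hinfbox, hinfag⟩
  have key := hsub ν y (mem_dev.1 hy.1).1 z (mem_dev.1 hz.1).1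
    (fun j hj => by rw [hyag j hj, hzag j hj])
  have h1 : F ν y ≤ F ν (y ⊓ z) := hymin _ hinfdev
  have h2 : F ν (y ⊔ z) ≤ F ν z := by linarith
  exact ⟨hsupdev, fun y' hy' => le_trans h2 (hzmin y' hy')⟩

/-- the greatest best response -/
noncomputable def BR (ν : ι) (x : I → ℤ) : I → ℤ := by
  classical
  exact if h : (mins player L U F ν x).Nonempty then (mins player L U F ν x).sup' h id else x

omit hsub in
lemma mins_nonempty {ν : ι} {x : I → ℤ} (hx : x ∈ Finset.Icc L U) :
    (mins player L U F ν x).Nonempty := by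
  have hxdev : x ∈ dev player L U ν x := mem_dev.2 ⟨hx, fun _ _ => rfl⟩
  obtain ⟨y, hy, hymin⟩ := Finset.exists_min_image (dev player L U ν x) (F ν) ⟨x, hxdev⟩
  exact ⟨y, mem_mins.2 ⟨hy, hymin⟩⟩

lemma BR_mem_mins {ν : ι} {x : I → ℤ} (hx : x ∈ Finset.Icc L U) :
    BR (F := F) (player := player) (L := L) (U := U) ν x ∈ mins player L U F ν x := by
  classical
  rw [BR, dif_pos (mins_nonempty (F := F) hx)]
  exact Finset.sup'_induction _ _ (fun a ha b hb => sup_mem_mins hsub ha hb) (fun b hb => hb)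

omit hsub in
lemma le_BR {ν : ι} {x y : I → ℤ} (hy : y ∈ mins player L U F ν x) :
    y ≤ BR (F := F) (player := player) (L := L) (U := U) ν x := by
  classical
  rw [BR, dif_pos ⟨y, hy⟩]
  exact Finset.le_sup' id hy

lemma BR_mono {ν : ι} {x x' : I → ℤ} (hx : x ∈ Finset.Icc L U) (hx' : x' ∈ Finset.Icc L U)
    (hxx : x ≤ x') :
    BR (F := F) (player := player) (L := L) (U := U) ν x ≤
    BR (F := F) (player := player) (L := L) (U := U) ν x' := by
  set a := BR (F := F) (player := player) (L := L) (U := U) ν x with ha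
  set a' := BR (F := F) (player := player) (L := L) (U := U) ν x' with ha'
  have hma : a ∈ mins player L U F ν x := BR_mem_mins hsub hx
  have hma' : a' ∈ mins player L U F ν x' := BR_mem_mins hsub hx'
  obtain ⟨hadev, hamin⟩ := mem_mins.1 hma
  obtain ⟨ha'dev, ha'min⟩ := mem_mins.1 hma'
  obtain ⟨habox, haag⟩ := mem_dev.1 hadev
  obtain ⟨ha'box, ha'ag⟩ := mem_dev.1 ha'dev
  have hoff : ∀ j, player j ≠ ν → a j ≤ a' j := fun j hj => by
    rw [haag j hj, ha'ag j hj]; exact hxx j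
  have key := hsub ν a habox a' ha'box hoff
  rw [Finset.mem_Icc] at habox ha'box
  have hinfdev : a ⊓ a' ∈ dev player L U ν x := mem_dev.2 ⟨by
      rw [Finset.mem_Icc]
      exact ⟨le_inf habox.1 ha'box.1, le_trans inf_le_left habox.2⟩,
    fun j hj => by
      rw [Pi.inf_apply, haag j hj, ha'ag j hj]
      exact inf_eq_left.2 (hxx j)⟩
  have hsupdev : a ⊔ a' ∈ dev player L U ν x' := mem_dev.2 ⟨by
      rw [Finset.mem_Icc]
      exact ⟨le_trans habox.1 le_sup_left, sup_le habox.2 ha'box.2⟩,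
    fun j hj => by
      rw [Pi.sup_apply, haag j hj, ha'ag j hj]
      exact sup_eq_right.2 (hxx j)⟩
  have h1 : F ν a ≤ F ν (a ⊓ a') := hamin _ hinfdev
  have h2 : F ν (a ⊔ a') ≤ F ν a' := by linarith
  have hsupmin : a ⊔ a' ∈ mins player L U F ν x' :=
    mem_mins.2 ⟨hsupdev, fun y' hy' => le_trans h2 (ha'min y' hy')⟩
  exact le_trans le_sup_left (le_BR hsupmin)

/-- simultaneous best-response map -/
noncomputable def Tmap (x : I → ℤ) : I → ℤ :=
  fun i => BR (F := F) (player := player) (L := L) (U := U) (player i) x i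

lemma Tmap_mem {x : I → ℤ} (hx : x ∈ Finset.Icc L U) :
    Tmap (F := F) (player := player) (L := L) (U := U) x ∈ Finset.Icc L U := by
  rw [Finset.mem_Icc]
  constructor <;> intro i <;>
  · have := (mem_dev.1 (mem_mins.1 (BR_mem_mins hsub (ν := player i) hx)).1).1
    rw [Finset.mem_Icc] at this
    first
      | exact this.1 i
      | exact this.2 i

lemma Tmap_mono {x x' : I → ℤ} (hx : x ∈ Finset.Icc L U) (hx' : x' ∈ Finset.Icc L U)
    (hxx : x ≤ x') :
    Tmap (F := F) (player := player) (L := L) (U := U) x ≤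
    Tmap (F := F) (player := player) (L := L) (U := U) x' :=
  fun i => BR_mono hsub hx hx' hxx i

theorem abstract_eq (hLU : L ≤ U) :
    ∃ x ∈ Finset.Icc L U, ∀ ν, ∀ y ∈ dev player L U ν x, F ν x ≤ F ν y := by
  classical
  set T := Tmap (F := F) (player := player) (L := L) (U := U) with hT
  -- iterate T from L
  set c : ℕ → I → ℤ := fun k => T^[k] L with hc
  have hbot : L ∈ Finset.Icc L U := Finset.mem_Icc.2 ⟨le_refl _, hLU⟩
  have hchain : ∀ k, c k ∈ Finset.Icc L U ∧ c k ≤ c (k + 1) := by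
    intro k
    induction k with
    | zero =>
      refine ⟨hbot, ?_⟩
      have : c 1 ∈ Finset.Icc L U := by
        simpa [hc, Function.iterate_one] using Tmap_mem hsub hbot
      exact (Finset.mem_Icc.1 this).1
    | succ n ih =>
      have hmem : c (n + 1) ∈ Finset.Icc L U := by
        have : c (n + 1) = T (c n) := by
          simp [hc, Function.iterate_succ_apply']
        rw [this]; exact Tmap_mem hsub ih.1
      refine ⟨hmem, ?_⟩
      have e1 : c (n + 1) = T (c n) := by simp [hc, Function.iterate_succ_apply']
      have e2 : c (n + 2) = T (c (n + 1)) := by simp [hc, Function.iterate_succ_apply']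
      rw [e1, e2]
      exact Tmap_mono hsub ih.1 hmem ih.2
  -- find a fixed point
  have hfix : ∃ k, c (k + 1) = c k := by
    by_contra hcon
    push_neg at hcon
    set N : ℕ := ((∑ i, (U i - L i)).toNat + 1) with hN
    -- sums strictly increase
    have hstep : ∀ k, (∑ i, c k i) < ∑ i, c (k + 1) i := by
      intro k
      refine Finset.sum_lt_sum (fun i _ => (hchain k).2 i) ?_
      by_contra hall
      push_neg at hall
      exact hcon k (funext fun i => le_antisymm (hall i (Finset.mem_univ i)) ((hchain k).2 i))
    have hgrow : ∀ k : ℕ, (∑ i, L i) + (k : ℤ) ≤ ∑ i, c k i := by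
      intro k
      induction k with
      | zero => simp [hc]
      | succ n ih =>
        have := hstep n
        push_cast
        omega
    have hupper : ∑ i, c N i ≤ ∑ i, U i :=
      Finset.sum_le_sum (fun i _ => (Finset.mem_Icc.1 (hchain N).1).2 i)
    have h1 := hgrow N
    have h2 : (0:ℤ) ≤ ∑ i, (U i - L i) := Finset.sum_nonneg (fun i _ => sub_nonneg.2 (hLU i))
    have h4 : (∑ i, (U i - L i) : ℤ) = (∑ i, U i) - ∑ i, L i := Finset.sum_sub_distrib _ _
    have h5 : (N : ℤ) = (∑ i, U i) - (∑ i, L i) + 1 := by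
      rw [hN]; push_cast; rw [Int.toNat_of_nonneg h2, h4]
    linarith
  obtain ⟨k, hk⟩ := hfix
  set x := c k with hx
  have hxbox : x ∈ Finset.Icc L U := (hchain k).1
  refine ⟨x, hxbox, fun ν y hy => ?_⟩
  -- T x = x
  have hTx : T x = x := by
    have : c (k + 1) = T (c k) := by simp [hc, Function.iterate_succ_apply']
    rw [← this, hk]
  -- BR ν x = x
  have hbr : BR (F := F) (player := player) (L := L) (U := U) ν x = x := by
    funext i
    by_cases hi : player i = ν
    · have : T x i = x i := by rw [hTx]
      rw [← hi]
      exact this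
    · exact (mem_dev.1 (mem_mins.1 (BR_mem_mins hsub (ν := ν) hxbox)).1).2 i hi
  have := (mem_mins.1 (BR_mem_mins hsub (ν := ν) hxbox)).2 y hy
  rwa [hbr] at this

end Abstract

set_option linter.unusedSectionVars false


section Concrete
variable {ι I : Type*} [Fintype I] [DecidableEq I] [DecidableEq ι]

/-- sign of each variable group -/
def tgEps (G : I → Bool) : I → ℤ := fun i => if G i then 1 else -1

/-- transformed lower bound -/
def tgL (l u : I → ℤ) (G : I → Bool) : I → ℤ := fun i => if G i then l i else -u i

/-- transformed upper bound -/
def tgU (l u : I → ℤ) (G : I → Bool) : I → ℤ := fun i => if G i then u i else -l i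

/-- real profile associated to a transformed integer profile -/
noncomputable def tgPsi (G : I → Bool) (z : I → ℤ) : I → ℝ :=
  fun t => ((tgEps G t * z t : ℤ) : ℝ)

lemma tgEps_mul_self (G : I → Bool) (i : I) : tgEps G i * tgEps G i = 1 := by
  unfold tgEps; split <;> ring

lemma tgEps_cases (G : I → Bool) (i : I) :
    tgEps G i = 1 ∧ G i = true ∨ tgEps G i = -1 ∧ G i = false := by
  unfold tgEps
  rcases Bool.eq_false_or_eq_true (G i) with h | h <;> simp [h]

lemma tgPsi_bounds {l u : I → ℤ} {G : I → Bool} {z : I → ℤ}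
    (hz : z ∈ Finset.Icc (tgL l u G) (tgU l u G)) :
    ∀ t, (l t : ℝ) ≤ tgPsi G z t ∧ tgPsi G z t ≤ (u t : ℝ) := by
  rw [Finset.mem_Icc] at hz
  intro t
  have h1 := hz.1 t
  have h2 := hz.2 t
  simp only [tgL, tgU] at h1 h2
  have hZ : l t ≤ tgEps G t * z t ∧ tgEps G t * z t ≤ u t := by
    rcases tgEps_cases G t with ⟨he, hb⟩ | ⟨he, hb⟩ <;> rw [he] <;>
      simp [hb] at h1 h2 <;> omega
  constructor
  · show (l t : ℝ) ≤ ((tgEps G t * z t : ℤ) : ℝ); exact_mod_cast hZ.1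
  · show ((tgEps G t * z t : ℤ) : ℝ) ≤ (u t : ℝ); exact_mod_cast hZ.2

lemma tgPsi_mem {l u : I → ℤ} {G : I → Bool} {y : I → ℤ}
    (hy : ∀ t, l t ≤ y t ∧ y t ≤ u t) :
    (fun t => tgEps G t * y t) ∈ Finset.Icc (tgL l u G) (tgU l u G) := by
  rw [Finset.mem_Icc]
  constructor <;> intro t <;>
  · have h1 := (hy t).1
    have h2 := (hy t).2
    simp only [tgL, tgU, tgEps]
    split <;> omega

/-- single-coordinate monotonicity of the signed Θ factor -/
lemma tgSCL {player : I → ι} {l u : I → ℤ} {Θ : I → (I → ℝ) → ℝ} {G : I → Bool}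
    (hΘdep : ∀ i (x y : I → ℝ),
      (∀ j, player j ≠ player i → x j = y j) → Θ i x = Θ i y)
    (hΘdiff : ∀ i, Differentiable ℝ (Θ i))
    (hΘsign : ∀ i j, player i ≠ player j → ∀ x : I → ℝ,
      (∀ t, (l t : ℝ) ≤ x t ∧ x t ≤ (u t : ℝ)) →
      ((G i = G j → deriv (fun s => Θ i (Function.update x j s)) (x j) ≤ 0) ∧
       (G i ≠ G j → 0 ≤ deriv (fun s => Θ i (Function.update x j s)) (x j))))
    (i j : I) (v : I → ℤ) (hv : v ∈ Finset.Icc (tgL l u G) (tgU l u G))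
    (s t : ℤ) (hs : tgL l u G j ≤ s) (hst : s ≤ t) (ht : t ≤ tgU l u G j) :
    (tgEps G i : ℝ) * Θ i (tgPsi G (Function.update v j t)) ≤
      (tgEps G i : ℝ) * Θ i (tgPsi G (Function.update v j s)) := by
  have hupd : ∀ r : ℤ, tgPsi G (Function.update v j r)
      = Function.update (tgPsi G v) j ((tgEps G j * r : ℤ) : ℝ) := by
    intro r
    funext t'
    by_cases h : t' = j
    · subst h; simp [tgPsi]
    · simp [tgPsi, Function.update_of_ne h]
  by_cases hp : player j = player i
  · -- Θ i does not depend on coordinate j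
    have heq : Θ i (tgPsi G (Function.update v j t)) = Θ i (tgPsi G (Function.update v j s)) := by
      apply hΘdep
      intro j' hj'
      have hne : j' ≠ j := fun h => hj' (h ▸ hp)
      rw [hupd t, hupd s, Function.update_of_ne hne, Function.update_of_ne hne]
    exact le_of_eq (by rw [heq])
  · have hne : player i ≠ player j := fun h => hp h.symm
    set g : ℝ → ℝ := fun r => Θ i (Function.update (tgPsi G v) j r) with hg
    have hgd : Differentiable ℝ g := by
      have : Differentiable ℝ (Θ i ∘ Function.update (tgPsi G v) j) :=
        (hΘdiff i).comp (fun r => (hasDerivAt_update (tgPsi G v) j r).differentiableAt)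
      exact this
    have hbox := tgPsi_bounds hv
    -- deriv sign of g on the real interval
    have hds : ∀ r ∈ Set.Icc (l j : ℝ) (u j : ℝ),
        (G i = G j → deriv g r ≤ 0) ∧ (G i ≠ G j → 0 ≤ deriv g r) := by
      intro r hr
      have hxbox : ∀ t', (l t' : ℝ) ≤ Function.update (tgPsi G v) j r t' ∧
          Function.update (tgPsi G v) j r t' ≤ (u t' : ℝ) := by
        intro t'
        by_cases h : t' = j
        · subst h; simp only [Function.update_self]; exact ⟨hr.1, hr.2⟩
        · rw [Function.update_of_ne h]; exact hbox t'
      have := hΘsign i j hne (Function.update (tgPsi G v) j r) hxbox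
      have he : (fun s => Θ i (Function.update (Function.update (tgPsi G v) j r) j s)) = g := by
        funext s'
        rw [Function.update_idem]
      rw [he, Function.update_self] at this
      exact this
    -- the two evaluation points
    set A : ℝ := ((tgEps G j * s : ℤ) : ℝ) with hA
    set B : ℝ := ((tgEps G j * t : ℤ) : ℝ) with hB
    have hZ : (l j ≤ tgEps G j * s ∧ tgEps G j * s ≤ u j)
        ∧ (l j ≤ tgEps G j * t ∧ tgEps G j * t ≤ u j) := by
      simp only [tgL, tgU] at hs ht
      rcases tgEps_cases G j with ⟨he, hb⟩ | ⟨he, hb⟩ <;> rw [he] <;>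
        simp [hb] at hs ht <;> omega
    have hmemA : A ∈ Set.Icc (l j : ℝ) (u j : ℝ) := by
      rw [hA]; exact Set.mem_Icc.2 ⟨by exact_mod_cast hZ.1.1, by exact_mod_cast hZ.1.2⟩
    have hmemB : B ∈ Set.Icc (l j : ℝ) (u j : ℝ) := by
      rw [hB]; exact Set.mem_Icc.2 ⟨by exact_mod_cast hZ.2.1, by exact_mod_cast hZ.2.2⟩
    have hmem : A ∈ Set.Icc (l j : ℝ) (u j : ℝ) ∧ B ∈ Set.Icc (l j : ℝ) (u j : ℝ) :=
      ⟨hmemA, hmemB⟩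
    rw [hupd t, hupd s]
    show (tgEps G i : ℝ) * g ((tgEps G j * t : ℤ) : ℝ) ≤ (tgEps G i : ℝ) * g ((tgEps G j * s : ℤ) : ℝ)
    rw [show ((tgEps G j * t : ℤ) : ℝ) = B from rfl, show ((tgEps G j * s : ℤ) : ℝ) = A from rfl]
    by_cases hGG : G i = G j
    · have hanti : AntitoneOn g (Set.Icc (l j : ℝ) (u j : ℝ)) :=
        antitoneOn_of_deriv_nonpos (convex_Icc _ _) hgd.continuous.continuousOn
          hgd.differentiableOn
          (fun r hr => (hds r (interior_subset hr)).1 hGG)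
      rcases tgEps_cases G i with ⟨hei, hgi⟩ | ⟨hei, hgi⟩ <;>
        rcases tgEps_cases G j with ⟨hej, hgj⟩ | ⟨hej, hgj⟩
      · -- both true
        have hAB : A ≤ B := by
          rw [hA, hB, hej]; exact_mod_cast (by omega : 1 * s ≤ 1 * t)
        have := hanti hmem.1 hmem.2 hAB
        rw [hei]; push_cast; linarith
      · rw [hgi, hgj] at hGG; simp at hGG
      · rw [hgi, hgj] at hGG; simp at hGG
      · -- both false
        have hBA : B ≤ A := by
          rw [hA, hB, hej]; exact_mod_cast (by omega : -1 * t ≤ -1 * s)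
        have := hanti hmem.2 hmem.1 hBA
        rw [hei]; push_cast; linarith
    · have hmono : MonotoneOn g (Set.Icc (l j : ℝ) (u j : ℝ)) :=
        monotoneOn_of_deriv_nonneg (convex_Icc _ _) hgd.continuous.continuousOn
          hgd.differentiableOn
          (fun r hr => (hds r (interior_subset hr)).2 hGG)
      rcases tgEps_cases G i with ⟨hei, hgi⟩ | ⟨hei, hgi⟩ <;>
        rcases tgEps_cases G j with ⟨hej, hgj⟩ | ⟨hej, hgj⟩
      · rw [hgi, hgj] at hGG; simp at hGG
      · -- G i true, G j false : B ≤ A, monotone, eps i = 1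
        have hBA : B ≤ A := by
          rw [hA, hB, hej]; exact_mod_cast (by omega : -1 * t ≤ -1 * s)
        have := hmono hmem.2 hmem.1 hBA
        rw [hei]; push_cast; linarith
      · -- G i false, G j true : A ≤ B, monotone, eps i = -1
        have hAB : A ≤ B := by
          rw [hA, hB, hej]; exact_mod_cast (by omega : 1 * s ≤ 1 * t)
        have := hmono hmem.1 hmem.2 hAB
        rw [hei]; push_cast; linarith
      · rw [hgi, hgj] at hGG; simp at hGG

/-- global monotonicity of the signed Θ factor -/
lemma tgKML {player : I → ι} {l u : I → ℤ} {Θ : I → (I → ℝ) → ℝ} {G : I → Bool}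
    (hΘdep : ∀ i (x y : I → ℝ),
      (∀ j, player j ≠ player i → x j = y j) → Θ i x = Θ i y)
    (hΘdiff : ∀ i, Differentiable ℝ (Θ i))
    (hΘsign : ∀ i j, player i ≠ player j → ∀ x : I → ℝ,
      (∀ t, (l t : ℝ) ≤ x t ∧ x t ≤ (u t : ℝ)) →
      ((G i = G j → deriv (fun s => Θ i (Function.update x j s)) (x j) ≤ 0) ∧
       (G i ≠ G j → 0 ≤ deriv (fun s => Θ i (Function.update x j s)) (x j))))
    (z w : I → ℤ) (hz : z ∈ Finset.Icc (tgL l u G) (tgU l u G))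
    (hw : w ∈ Finset.Icc (tgL l u G) (tgU l u G)) (hzw : z ≤ w) (i : I) :
    (tgEps G i : ℝ) * Θ i (tgPsi G w) ≤ (tgEps G i : ℝ) * Θ i (tgPsi G z) := by
  classical
  rw [Finset.mem_Icc] at hz hw
  set mix : Finset I → (I → ℤ) := fun S => fun j => if j ∈ S then w j else z j with hmix
  have hmixbox : ∀ S, mix S ∈ Finset.Icc (tgL l u G) (tgU l u G) := by
    intro S
    rw [Finset.mem_Icc]
    constructor <;> intro j <;> simp only [hmix] <;> split
    · exact hw.1 j
    · exact hz.1 j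
    · exact hw.2 j
    · exact hz.2 j
  have key : ∀ S : Finset I,
      (tgEps G i : ℝ) * Θ i (tgPsi G (mix S)) ≤ (tgEps G i : ℝ) * Θ i (tgPsi G z) := by
    intro S
    induction S using Finset.induction_on with
    | empty => simp [hmix]
    | @insert j S hj ih =>
      have h1 : mix (insert j S) = Function.update (mix S) j (w j) := by
        funext t'
        by_cases h : t' = j
        · subst h; simp [hmix]
        · simp [hmix, Function.update_of_ne h, h]
      have h2 : mix S = Function.update (mix S) j (z j) := by
        have : z j = mix S j := by simp [hmix, hj]
        rw [this, Function.update_eq_self]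
      have step := tgSCL hΘdep hΘdiff hΘsign i j (mix S) (hmixbox S) (z j) (w j)
        (hz.1 j) (hzw j) (hw.2 j)
      rw [h1]
      calc (tgEps G i : ℝ) * Θ i (tgPsi G (Function.update (mix S) j (w j)))
          ≤ (tgEps G i : ℝ) * Θ i (tgPsi G (Function.update (mix S) j (z j))) := step
        _ = (tgEps G i : ℝ) * Θ i (tgPsi G (mix S)) := by rw [← h2]
        _ ≤ _ := ih
  have huniv : mix Finset.univ = w := by funext t'; simp [hmix]
  have := key Finset.univ
  rwa [huniv] at this

/-- pointwise quadratic inequality -/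
lemma tgquad (c : ℝ) (e1 e2 p1 q1 p2 q2 : ℤ) (he : c * ((e1 : ℝ) * (e2 : ℝ)) ≤ 0) :
    c * ((e1 * (p1 ⊔ q1) : ℤ) : ℝ) * ((e2 * (p2 ⊔ q2) : ℤ) : ℝ)
      + c * ((e1 * (p1 ⊓ q1) : ℤ) : ℝ) * ((e2 * (p2 ⊓ q2) : ℤ) : ℝ)
    ≤ c * ((e1 * p1 : ℤ) : ℝ) * ((e2 * p2 : ℤ) : ℝ)
      + c * ((e1 * q1 : ℤ) : ℝ) * ((e2 * q2 : ℤ) : ℝ) := by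
  rcases le_total p1 q1 with h1 | h1 <;> rcases le_total p2 q2 with h2 | h2
  · rw [sup_eq_right.2 h1, inf_eq_left.2 h1, sup_eq_right.2 h2, inf_eq_left.2 h2]
    try push_cast
    try linarith
  · rw [sup_eq_right.2 h1, inf_eq_left.2 h1, sup_eq_left.2 h2, inf_eq_right.2 h2]
    push_cast
    have c1 : (p1 : ℝ) ≤ q1 := by exact_mod_cast h1
    have c2 : (q2 : ℝ) ≤ p2 := by exact_mod_cast h2
    nlinarith [mul_nonneg (sub_nonneg.2 c1) (sub_nonneg.2 c2), he]
  · rw [sup_eq_left.2 h1, inf_eq_right.2 h1, sup_eq_right.2 h2, inf_eq_left.2 h2]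
    push_cast
    have c1 : (q1 : ℝ) ≤ p1 := by exact_mod_cast h1
    have c2 : (p2 : ℝ) ≤ q2 := by exact_mod_cast h2
    nlinarith [mul_nonneg (sub_nonneg.2 c1) (sub_nonneg.2 c2), he]
  · rw [sup_eq_left.2 h1, inf_eq_right.2 h1, sup_eq_left.2 h2, inf_eq_right.2 h2]
    try push_cast
    try linarith

/-- pointwise diagonal equality -/
lemma tgdiag (c : ℝ) (e p q : ℤ) :
    c * ((e * (p ⊔ q) : ℤ) : ℝ) * ((e * (p ⊔ q) : ℤ) : ℝ)
      + c * ((e * (p ⊓ q) : ℤ) : ℝ) * ((e * (p ⊓ q) : ℤ) : ℝ)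
    = c * ((e * p : ℤ) : ℝ) * ((e * p : ℤ) : ℝ)
      + c * ((e * q : ℤ) : ℝ) * ((e * q : ℤ) : ℝ) := by
  rcases le_total p q with h | h
  · rw [sup_eq_right.2 h, inf_eq_left.2 h]; try push_cast; try ring
  · rw [sup_eq_left.2 h, inf_eq_right.2 h]; try push_cast; try ring

end Concrete

section Main
variable {ι I : Type*} [Fintype I] [DecidableEq I] [DecidableEq ι]

set_option maxHeartbeats 1000000 in
/-- restricted submodularity of the transformed objective -/
lemma tgsub {player : I → ι} {l u : I → ℤ} {ϑ : I → ℝ → ℝ} {Q : I → I → ℝ}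
    {Θ : I → (I → ℝ) → ℝ} {G : I → Bool}
    (hΘdep : ∀ i (x y : I → ℝ),
      (∀ j, player j ≠ player i → x j = y j) → Θ i x = Θ i y)
    (hΘdiff : ∀ i, Differentiable ℝ (Θ i))
    (hQsign : ∀ i j, i ≠ j → player i = player j →
      ((G i = G j → Q i j ≤ 0) ∧ (G i ≠ G j → 0 ≤ Q i j)))
    (hΘsign : ∀ i j, player i ≠ player j → ∀ x : I → ℝ,
      (∀ t, (l t : ℝ) ≤ x t ∧ x t ≤ (u t : ℝ)) →
      ((G i = G j → deriv (fun s => Θ i (Function.update x j s)) (x j) ≤ 0) ∧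
       (G i ≠ G j → 0 ≤ deriv (fun s => Θ i (Function.update x j s)) (x j))))
    (ν : ι) (p : I → ℤ) (hp : p ∈ Finset.Icc (tgL l u G) (tgU l u G))
    (q : I → ℤ) (hq : q ∈ Finset.Icc (tgL l u G) (tgU l u G))
    (hpq : ∀ j, player j ≠ ν → p j ≤ q j) :
    tgObj player ϑ Q Θ ν (tgPsi G (p ⊔ q)) + tgObj player ϑ Q Θ ν (tgPsi G (p ⊓ q)) ≤
      tgObj player ϑ Q Θ ν (tgPsi G p) + tgObj player ϑ Q Θ ν (tgPsi G q) := by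
  classical
  rw [Finset.mem_Icc] at hp hq
  have hsupbox : p ⊔ q ∈ Finset.Icc (tgL l u G) (tgU l u G) := by
    rw [Finset.mem_Icc]
    exact ⟨le_trans hp.1 le_sup_left, sup_le hp.2 hq.2⟩
  have hinfbox : p ⊓ q ∈ Finset.Icc (tgL l u G) (tgU l u G) := by
    rw [Finset.mem_Icc]
    exact ⟨le_inf hp.1 hq.1, le_trans inf_le_left hp.2⟩
  set B : Finset I := univ.filter (fun i => player i = ν) with hB
  -- part 1 : separable + Θ-linear terms
  have H1 : ∀ i ∈ B,
      (ϑ i (tgPsi G (p ⊔ q) i) + Θ i (tgPsi G (p ⊔ q)) * tgPsi G (p ⊔ q) i)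
        + (ϑ i (tgPsi G (p ⊓ q) i) + Θ i (tgPsi G (p ⊓ q)) * tgPsi G (p ⊓ q) i)
      ≤ (ϑ i (tgPsi G p i) + Θ i (tgPsi G p) * tgPsi G p i)
        + (ϑ i (tgPsi G q i) + Θ i (tgPsi G q) * tgPsi G q i) := by
    intro i hi
    have hiv : player i = ν := by simpa [hB] using hi
    -- Θ of sup/inf equals Θ of q/p
    have e1 : Θ i (tgPsi G (p ⊔ q)) = Θ i (tgPsi G q) := by
      apply hΘdep
      intro j hj
      rw [hiv] at hj
      have : (p ⊔ q) j = q j := by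
        rw [Pi.sup_apply]; exact sup_eq_right.2 (hpq j hj)
      simp [tgPsi, this]
    have e2 : Θ i (tgPsi G (p ⊓ q)) = Θ i (tgPsi G p) := by
      apply hΘdep
      intro j hj
      rw [hiv] at hj
      have : (p ⊓ q) j = p j := by
        rw [Pi.inf_apply]; exact inf_eq_left.2 (hpq j hj)
      simp [tgPsi, this]
    rw [e1, e2]
    rcases le_total (p i) (q i) with h | h
    · have s1 : (p ⊔ q) i = q i := by rw [Pi.sup_apply]; exact sup_eq_right.2 h
      have s2 : (p ⊓ q) i = p i := by rw [Pi.inf_apply]; exact inf_eq_left.2 h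
      have t1 : tgPsi G (p ⊔ q) i = tgPsi G q i := by simp [tgPsi, s1]
      have t2 : tgPsi G (p ⊓ q) i = tgPsi G p i := by simp [tgPsi, s2]
      rw [t1, t2]; linarith
    · have s1 : (p ⊔ q) i = p i := by rw [Pi.sup_apply]; exact sup_eq_left.2 h
      have s2 : (p ⊓ q) i = q i := by rw [Pi.inf_apply]; exact inf_eq_right.2 h
      have t1 : tgPsi G (p ⊔ q) i = tgPsi G p i := by simp [tgPsi, s1]
      have t2 : tgPsi G (p ⊓ q) i = tgPsi G q i := by simp [tgPsi, s2]
      rw [t1, t2]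
      -- signed Θ monotonicity through intermediate profile p'
      set p' : I → ℤ := fun j => if player j = ν then q j else p j with hp'
      have hp'box : p' ∈ Finset.Icc (tgL l u G) (tgU l u G) := by
        rw [Finset.mem_Icc]
        constructor <;> intro j <;> simp only [hp'] <;> split
        · exact hq.1 j
        · exact hp.1 j
        · exact hq.2 j
        · exact hp.2 j
      have hΘp : Θ i (tgPsi G p) = Θ i (tgPsi G p') := by
        apply hΘdep
        intro j hj
        rw [hiv] at hj
        simp [tgPsi, hp', if_neg hj]
      have hqbox : q ∈ Finset.Icc (tgL l u G) (tgU l u G) := Finset.mem_Icc.2 hq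
      have hle : p' ≤ q := by
        intro j
        by_cases hj : player j = ν
        · simp [hp', hj]
        · simp [hp', hj]; exact hpq j hj
      have key := tgKML hΘdep hΘdiff hΘsign p' q hp'box hqbox hle i
      rw [← hΘp] at key
      -- now pure algebra
      have hc : (q i : ℝ) ≤ (p i : ℝ) := by exact_mod_cast h
      have hps : tgPsi G p i = (tgEps G i : ℝ) * (p i : ℝ) := by simp [tgPsi]
      have hqs : tgPsi G q i = (tgEps G i : ℝ) * (q i : ℝ) := by simp [tgPsi]
      rw [hps, hqs]
      nlinarith [mul_nonneg (sub_nonneg.2 key) (sub_nonneg.2 hc)]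
  -- part 2 : quadratic terms
  have H2 : ∀ i ∈ B, ∀ j ∈ B,
      Q i j * tgPsi G (p ⊔ q) i * tgPsi G (p ⊔ q) j
        + Q i j * tgPsi G (p ⊓ q) i * tgPsi G (p ⊓ q) j
      ≤ Q i j * tgPsi G p i * tgPsi G p j + Q i j * tgPsi G q i * tgPsi G q j := by
    intro i hi j hj
    have hiv : player i = ν := by simpa [hB] using hi
    have hjv : player j = ν := by simpa [hB] using hj
    have hsup : ∀ t, tgPsi G (p ⊔ q) t = ((tgEps G t * (p t ⊔ q t) : ℤ) : ℝ) := by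
      intro t; simp [tgPsi, Pi.sup_apply]
    have hinf : ∀ t, tgPsi G (p ⊓ q) t = ((tgEps G t * (p t ⊓ q t) : ℤ) : ℝ) := by
      intro t; simp [tgPsi, Pi.inf_apply]
    rw [hsup i, hsup j, hinf i, hinf j]
    show Q i j * ((tgEps G i * (p i ⊔ q i) : ℤ) : ℝ) * ((tgEps G j * (p j ⊔ q j) : ℤ) : ℝ)
        + Q i j * ((tgEps G i * (p i ⊓ q i) : ℤ) : ℝ) * ((tgEps G j * (p j ⊓ q j) : ℤ) : ℝ)
      ≤ Q i j * ((tgEps G i * p i : ℤ) : ℝ) * ((tgEps G j * p j : ℤ) : ℝ)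
        + Q i j * ((tgEps G i * q i : ℤ) : ℝ) * ((tgEps G j * q j : ℤ) : ℝ)
    by_cases hij : i = j
    · subst hij
      exact le_of_eq (tgdiag _ _ _ _)
    · apply tgquad
      obtain ⟨hs1, hs2⟩ := hQsign i j hij (hiv.trans hjv.symm)
      rcases tgEps_cases G i with ⟨hei, hgi⟩ | ⟨hei, hgi⟩ <;>
        rcases tgEps_cases G j with ⟨hej, hgj⟩ | ⟨hej, hgj⟩ <;> rw [hei, hej] <;> push_cast
      · have := hs1 (hgi.trans hgj.symm); linarith
      · have := hs2 (by rw [hgi, hgj]; simp); linarith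
      · have := hs2 (by rw [hgi, hgj]; simp); linarith
      · have := hs1 (hgi.trans hgj.symm); linarith
  -- assemble
  have S1 : (∑ i ∈ B, (ϑ i (tgPsi G (p ⊔ q) i) + Θ i (tgPsi G (p ⊔ q)) * tgPsi G (p ⊔ q) i))
      + (∑ i ∈ B, (ϑ i (tgPsi G (p ⊓ q) i) + Θ i (tgPsi G (p ⊓ q)) * tgPsi G (p ⊓ q) i))
      ≤ (∑ i ∈ B, (ϑ i (tgPsi G p i) + Θ i (tgPsi G p) * tgPsi G p i))
        + (∑ i ∈ B, (ϑ i (tgPsi G q i) + Θ i (tgPsi G q) * tgPsi G q i)) := by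
    rw [← Finset.sum_add_distrib, ← Finset.sum_add_distrib]
    exact Finset.sum_le_sum H1
  have S2 : (∑ i ∈ B, ∑ j ∈ B, Q i j * tgPsi G (p ⊔ q) i * tgPsi G (p ⊔ q) j)
      + (∑ i ∈ B, ∑ j ∈ B, Q i j * tgPsi G (p ⊓ q) i * tgPsi G (p ⊓ q) j)
      ≤ (∑ i ∈ B, ∑ j ∈ B, Q i j * tgPsi G p i * tgPsi G p j)
        + (∑ i ∈ B, ∑ j ∈ B, Q i j * tgPsi G q i * tgPsi G q j) := by
    rw [← Finset.sum_add_distrib, ← Finset.sum_add_distrib]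
    refine Finset.sum_le_sum (fun i hi => ?_)
    rw [← Finset.sum_add_distrib, ← Finset.sum_add_distrib]
    exact Finset.sum_le_sum (fun j hj => H2 i hi j hj)
  simp only [tgObj, ← hB]
  linarith

end Main

end AuxTG

/-- Corollary 1: every 2-groups partitionable discrete NEP with nonempty
bounded box feasible set has at least one Nash equilibrium.  `G i = true`
means variable `i` belongs to group `G₁`, `G i = false` to `G₂`. -/
theorem stmt13 [Fintype I] [DecidableEq I] [DecidableEq ι]
    (player : I → ι) (l u : I → ℤ) (hlu : ∀ j, l j ≤ u j)
    (ϑ : I → ℝ → ℝ) (Q : I → I → ℝ) (Θ : I → (I → ℝ) → ℝ)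
    (hΘdep : ∀ i (x y : I → ℝ),
      (∀ j, player j ≠ player i → x j = y j) → Θ i x = Θ i y)
    (hΘcc : ∀ i, ConvexOn ℝ Set.univ (Θ i) ∨ ConcaveOn ℝ Set.univ (Θ i))
    (hΘdiff : ∀ i, Differentiable ℝ (Θ i))
    (hQsym : ∀ i j, player i = player j → Q i j = Q j i)
    (G : I → Bool)
    (hQsign : ∀ i j, i ≠ j → player i = player j →
      ((G i = G j → Q i j ≤ 0) ∧ (G i ≠ G j → 0 ≤ Q i j)))
    (hΘsign : ∀ i j, player i ≠ player j → ∀ x : I → ℝ,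
      (∀ t, (l t : ℝ) ≤ x t ∧ x t ≤ (u t : ℝ)) →
      ((G i = G j → deriv (fun s => Θ i (Function.update x j s)) (x j) ≤ 0) ∧
       (G i ≠ G j → 0 ≤ deriv (fun s => Θ i (Function.update x j s)) (x j)))) :
    ∃ x : I → ℤ, tgIsEq player ϑ Q Θ l u x := by
  classical
  have hLU : tgL l u G ≤ tgU l u G := by
    intro j
    simp only [tgL, tgU]
    split
    · exact hlu j
    · have := hlu j; omega
  set F : ι → (I → ℤ) → ℝ := fun ν z => tgObj player ϑ Q Θ ν (tgPsi G z) with hF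
  have hsub : ∀ ν, ∀ p ∈ Finset.Icc (tgL l u G) (tgU l u G),
      ∀ q ∈ Finset.Icc (tgL l u G) (tgU l u G),
      (∀ j, player j ≠ ν → p j ≤ q j) → F ν (p ⊔ q) + F ν (p ⊓ q) ≤ F ν p + F ν q :=
    fun ν p hp q hq hpq => tgsub hΘdep hΘdiff hQsign hΘsign ν p hp q hq hpq
  obtain ⟨z, hz, hopt⟩ := abstract_eq hsub hLU
  refine ⟨fun i => tgEps G i * z i, ?_, ?_⟩
  · intro j
    show l j ≤ tgEps G j * z j ∧ tgEps G j * z j ≤ u j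
    have hzb := Finset.mem_Icc.1 hz
    have h1 := hzb.1 j
    have h2 := hzb.2 j
    simp only [tgL, tgU] at h1 h2
    rcases tgEps_cases G j with ⟨he, hb⟩ | ⟨he, hb⟩ <;> rw [he] <;>
      simp [hb] at h1 h2 <;> omega
  · intro ν y hy hyag
    set w : I → ℤ := fun i => tgEps G i * y i with hw
    have hwbox : w ∈ Finset.Icc (tgL l u G) (tgU l u G) := tgPsi_mem hy
    have hwag : ∀ j, player j ≠ ν → w j = z j := by
      intro j hj
      have hyx := hyag j hj
      rw [hw]
      simp only
      rw [hyx, ← mul_assoc, tgEps_mul_self, one_mul]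
    have hwdev : w ∈ dev player (tgL l u G) (tgU l u G) ν z := mem_dev.2 ⟨hwbox, hwag⟩
    have hle := hopt ν w hwdev
    have hzeq : F ν z = tgObj player ϑ Q Θ ν (fun t => (((fun i => tgEps G i * z i) t : ℤ) : ℝ)) := by
      rw [hF]; rfl
    have hweq : F ν w = tgObj player ϑ Q Θ ν (fun t => ((y t : ℤ) : ℝ)) := by
      rw [hF]
      show tgObj player ϑ Q Θ ν (tgPsi G w) = tgObj player ϑ Q Θ ν (fun t => ((y t : ℤ) : ℝ))
      congr 1
      funext t
      show ((tgEps G t * (tgEps G t * y t) : ℤ) : ℝ) = ((y t : ℤ) : ℝ)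
      rw [← mul_assoc, tgEps_mul_self, one_mul]
    rw [← hzeq, ← hweq]
    exact hle
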